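/- arXiv:2506.19722 — 2 statements merged into one kernel-verified Lean document; each statement's English description precedes it below -/
import Mathlib

section
/- Let I be a finite index set of trips on an arc with departure times d : I → ℝ and arrival times a : I → ℝ satisfying d(i) < a(i) for all i ∈ I. Let a further trip r have departure time D and arrival time A on the arc with D < A. Suppose R' = {i ∈ I : d(i) < D} is nonempty, and define the maximal forward shift Δs = D − max_{i ∈ R'} max(d(i), a(i)). Then for every shift amount σ with 0 ≤ σ ≤ Δs, setting the new departure D' = D − σ and new arrival A' = A − σ introduces no new conflicts: for every i ∈ I, if d(i) ≤ D' < a(i) then d(i) ≤ D < a(i), and if D' ≤ d(i) < A' then D ≤ d(i) < A. -/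
/-- Shifting a trip's traversal interval `[D, A)` on an arc earlier by any amount
`σ` with `0 ≤ σ ≤ Δs`, where
`Δs = D − max_{i : d i < D} max (d i) (a i)` is the maximal forward shift over the
nonempty set of preceding trips, introduces no new conflicts: any trip conflicting
with the shifted trip (in either direction) was already in conflict before the shift. -/
theorem forward_shift_no_new_conflicts {I : Type*} [Fintype I]
    (d a : I → ℝ) (hda : ∀ i, d i < a i) (D A : ℝ) (hDA : D < A)
    (hne : (Finset.univ.filter fun i : I => d i < D).Nonempty)
    (σ : ℝ) (hσ0 : 0 ≤ σ)
    (hσ : σ ≤ D - (Finset.univ.filter fun i : I => d i < D).sup' hne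
      (fun i => max (d i) (a i))) :
    (∀ i, d i ≤ D - σ → D - σ < a i → d i ≤ D ∧ D < a i) ∧
      (∀ i, D - σ ≤ d i → d i < A - σ → D ≤ d i ∧ d i < A) := by
  have hM : (Finset.univ.filter fun i : I => d i < D).sup' hne
      (fun i => max (d i) (a i)) ≤ D - σ := by linarith
  constructor
  · intro i h1 h2
    refine ⟨by linarith, ?_⟩
    by_contra h
    push_neg at h
    have hi : i ∈ Finset.univ.filter fun i : I => d i < D := by
      simp [lt_of_lt_of_le (hda i) h]
    have := Finset.le_sup' (fun i => max (d i) (a i)) hi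
    have : a i ≤ D - σ := le_trans (le_trans (le_max_right _ _) this) hM
    linarith
  · intro i h1 h2
    refine ⟨?_, by linarith⟩
    by_contra h
    push_neg at h
    have hi : i ∈ Finset.univ.filter fun i : I => d i < D := by simp [h]
    have := Finset.le_sup' (fun i => max (d i) (a i)) hi
    have : a i ≤ D - σ := le_trans (le_trans (le_max_right _ _) this) hM
    have := hda i
    linarith
end

section
/- Let I be a finite index set of trips on an arc with departure times d : I → ℝ and arrival times a : I → ℝ satisfying d(i) ≤ a(i) for all i and the FIFO property: d(i) ≤ d(j) implies a(i) ≤ a(j) for all i, j ∈ I. Let a trip r have current departure time D on the arc, and let r' ∈ I be its immediate predecessor in departure order, i.e., d(r') < D and d(i) ≤ d(r') for all i with d(i) < D. If r is delayed so that its new departure time is D' = D + (a(r') − D) = a(r') (assuming a(r') > D), then r conflicts with no predecessor at its new departure time: for every i ∈ I with d(i) < D, it is not the case that d(i) ≤ D' < a(i). -/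
/-- On a FIFO arc, delaying a trip whose immediate predecessor `r'` (in departure
order) it conflicts with (`D < a r'`) so that its new departure time is
`D' = D + (a r' − D) = a r'` removes all conflicts with predecessor trips:
no trip `i` with `d i < D` satisfies `d i ≤ a r' < a i`. -/
theorem delay_to_predecessor_arrival_resolves_conflicts {I : Type*} [Fintype I]
    (d a : I → ℝ) (hda : ∀ i, d i ≤ a i)
    (fifo : ∀ i j, d i ≤ d j → a i ≤ a j)
    (D : ℝ) (r' : I) (hr'dep : d r' < D)
    (hr'latest : ∀ i, d i < D → d i ≤ d r')
    (hconf : D < a r') :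
    ∀ i, d i < D → ¬ (d i ≤ D + (a r' - D) ∧ D + (a r' - D) < a i) := by
  intro i hi ⟨_, h2⟩
  have := fifo i r' (hr'latest i hi)
  linarith
end
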